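/- Let Ω ⊆ ℝ^N be open and let p > 1 be real. Let h = (h^{(1)},…,h^{(k)}) : Ω → ℝ^N be a C^1 vector field with div_λ h(x) > 0 for every x ∈ Ω. Then for every C^1 function u : ℝ^N → ℝ whose support is compact and contained in Ω and such that ∫_Ω (|h(x)|^p/(div_λ h(x))^{p−1}) |∇_λ u(x)|^p dx < ∞, one has ∫_Ω |u(x)|^p div_λ h(x) dx ≤ p^p ∫_Ω (|h(x)|^p/(div_λ h(x))^{p−1}) |∇_λ u(x)|^p dx. -/

import Mathlib

open MeasureTheory Finset

noncomputable section

/-- `ℝ^N = ℝ^{N_1} × ⋯ × ℝ^{N_k}` with the Euclidean norm. -/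
abbrev Eb {k : ℕ} (N : Fin k → ℕ) : Type :=
  PiLp 2 (fun i : Fin k => EuclideanSpace ℝ (Fin (N i)))

instance {k : ℕ} (N : Fin k → ℕ) : MeasurableSpace (Eb N) := WithLp.measurableSpace 2 _
instance {k : ℕ} (N : Fin k → ℕ) : BorelSpace (Eb N) := PiLp.borelSpace 2

/-- `λ_i(x) = ∏_j |x^{(j)}|^{α_{ij}}`. -/
def lamF {k : ℕ} (N : Fin k → ℕ) (α : Fin k → Fin k → ℝ) (i : Fin k) (x : Eb N) : ℝ :=
  ∏ j : Fin k, ‖x j‖ ^ (α i j)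

/-- the dilations `δ_r(x) = (r^{σ_1} x^{(1)}, …, r^{σ_k} x^{(k)})`. -/
def dilF {k : ℕ} (N : Fin k → ℕ) (σ : Fin k → ℝ) (r : ℝ) (x : Eb N) : Eb N :=
  (WithLp.equiv 2 _).symm (fun i => (r ^ σ i) • x i)

/-- the homogeneous norm `[[x]]_λ`. -/
def hnormF {k : ℕ} (N : Fin k → ℕ) (α : Fin k → Fin k → ℝ) (σ : Fin k → ℝ) (x : Eb N) : ℝ :=
  (∑ j : Fin k, (∏ i ∈ Finset.univ.erase j, (lamF N α i x) ^ 2) * (σ j) ^ 2 * ‖x j‖ ^ 2)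
    ^ (1 / (2 * (1 + ∑ i : Fin k, (σ i - 1))))

/-- the homogeneous distance from the origin `‖x‖_λ`. -/
def dnormF {k : ℕ} (N : Fin k → ℕ) (σ : Fin k → ℝ) (x : Eb N) : ℝ :=
  (∑ j : Fin k, ‖x j‖ ^ (2 * ∏ i ∈ Finset.univ.erase j, σ i))
    ^ (1 / (2 * ∏ i : Fin k, σ i))

/-- `∇_λ u = (λ_1 ∇_{x^{(1)}} u, …, λ_k ∇_{x^{(k)}} u)`. -/
def lgradF {k : ℕ} (N : Fin k → ℕ) (α : Fin k → Fin k → ℝ) (u : Eb N → ℝ) (x : Eb N) : Eb N :=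
  (WithLp.equiv 2 _).symm (fun i => lamF N α i x • (gradient u x) i)

/-- the standard basis vector of `ℝ^N` in block `i`, coordinate `j`. -/
def basisVecF {k : ℕ} (N : Fin k → ℕ) (i : Fin k) (j : Fin (N i)) : Eb N :=
  (WithLp.equiv 2 _).symm (Pi.single i (EuclideanSpace.single j 1))

/-- `div_λ h = ∑_i λ_i div_{x^{(i)}} h^{(i)}`. -/
def divlamF {k : ℕ} (N : Fin k → ℕ) (α : Fin k → Fin k → ℝ) (h : Eb N → Eb N) (x : Eb N) : ℝ :=
  ∑ i : Fin k, lamF N α i x * ∑ j : Fin (N i), fderiv ℝ h x (basisVecF N i j) i j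

/-- `Δ_λ u = ∑_i λ_i^2 Δ_{x^{(i)}} u`. -/
def lapLamF {k : ℕ} (N : Fin k → ℕ) (α : Fin k → Fin k → ℝ) (u : Eb N → ℝ) (x : Eb N) : ℝ :=
  ∑ i : Fin k, (lamF N α i x) ^ 2 * ∑ j : Fin (N i),
    fderiv ℝ (fun y => fderiv ℝ u y (basisVecF N i j)) x (basisVecF N i j)

/-- the homogeneous dimension `Q = σ_1 N_1 + ⋯ + σ_k N_k`. -/
def QF {k : ℕ} (N : Fin k → ℕ) (σ : Fin k → ℝ) : ℝ :=
  ∑ i : Fin k, σ i * N i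

/-!
Put `v = |u|^p`, a `C¹` function with `∇_λ v = p |u|^{p-2} u ∇_λ u`. Since `α_{ii} = 0`, the weight
`λ_i` is constant along the block `x^{(i)}`, so integrating by parts in each coordinate of that
block shows `∫ div_λ (v h) = 0`. Expanding `div_λ (v h) = v div_λ h + ⟨∇_λ v, h⟩` gives
`∫_Ω |u|^p div_λ h = -∫_Ω p |u|^{p-2} u ⟨∇_λ u, h⟩ ≤ p ∫_Ω |u|^{p-1} |h| |∇_λ u|`, and Hölder's
inequality with the weight `div_λ h` bounds the right-hand side by `p A^{(p-1)/p} C^{1/p}`, where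
`A` and `C` are the two integrals of the claim. As `A < ∞`, this gives `A ≤ p^p C`.
-/

theorem ContDiffOn.contDiff_of_tsupport_subset {𝕜 E F : Type*} [NontriviallyNormedField 𝕜]
    [NormedAddCommGroup E] [NormedSpace 𝕜 E] [NormedAddCommGroup F] [NormedSpace 𝕜 F]
    {n : WithTop ℕ∞} {f : E → F} {s : Set E} (hf : ContDiffOn 𝕜 n f s) (hs : IsOpen s)
    (hfs : tsupport f ⊆ s) : ContDiff 𝕜 n f := by
  refine contDiff_iff_contDiffAt.2 fun x => ?_
  by_cases hx : x ∈ s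
  · exact hf.contDiffAt (hs.mem_nhds hx)
  · exact contDiffAt_const.congr_of_eventuallyEq
      (notMem_tsupport_iff_eventuallyEq.1 fun hxf => hx (hfs hxf))

theorem integrable_mul_fderiv_apply {E : Type*} [NormedAddCommGroup E]
    [NormedSpace ℝ E] [MeasurableSpace E] [OpensMeasurableSpace E] {μ : Measure E}
    [IsFiniteMeasureOnCompacts μ] {f g : E → ℝ} (hf : Continuous f) (hg : ContDiff ℝ 1 g)
    (hgc : HasCompactSupport g) (v : E) : Integrable (fun x => f x * fderiv ℝ g x v) μ :=
  (hf.mul ((hg.continuous_fderiv one_ne_zero).clm_apply continuous_const))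
    |>.integrable_of_hasCompactSupport (hgc.fderiv_apply ℝ v).mul_left

theorem integral_mul_fderiv_eq_zero_of_add_smul_eq {E : Type*} [NormedAddCommGroup E]
    [NormedSpace ℝ E] [FiniteDimensional ℝ E] [MeasurableSpace E] [BorelSpace E]
    {μ : Measure E} [μ.IsAddHaarMeasure] {f g : E → ℝ} {v : E} (hf : Continuous f)
    (hfv : ∀ x (t : ℝ), f (x + t • v) = f x) (hg : ContDiff ℝ 1 g) (hgc : HasCompactSupport g) :
    ∫ x, f x * fderiv ℝ g x v ∂μ = 0 := by
  have hf' : ∀ x, HasLineDerivAt ℝ f 0 x v := fun x => by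
    simpa [HasLineDerivAt, hfv x] using hasDerivAt_const (0 : ℝ) (f x)
  have hg' : ∀ x, HasLineDerivAt ℝ g (fderiv ℝ g x v) x v := fun x =>
    (hg.differentiable one_ne_zero x).hasFDerivAt.hasLineDerivAt v
  simpa using integral_bilinear_hasLineDerivAt_right_eq_neg_left_of_integrable
    (B := ContinuousLinearMap.mul ℝ ℝ) (f' := fun _ => 0) (by simp)
    (integrable_mul_fderiv_apply (μ := μ) hf hg hgc v)
    ((hf.mul hg.continuous).integrable_of_hasCompactSupport hgc.mul_left)
    (fun x _ => hf' x) (fun x _ => hg' x)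

theorem rpow_sub_one_mul_eq_rpow_mul_rpow {p a b w : ℝ} (hp : 0 < p) (ha : 0 ≤ a) (hb : 0 ≤ b)
    (hw : 0 < w) :
    a ^ (p - 1) * b = (a ^ p * w) ^ ((p - 1) / p) * (b ^ p / w ^ (p - 1)) ^ (1 / p) := by
  rw [Real.mul_rpow (by positivity) hw.le, Real.div_rpow (by positivity) (by positivity),
    ← Real.rpow_mul ha, ← Real.rpow_mul hb, ← Real.rpow_mul hw.le]
  field_simp
  rw [Real.rpow_one]

theorem lintegral_rpow_sub_one_mul_mul_le {α : Type*} [MeasurableSpace α] {μ : Measure α}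
    {p : ℝ} (hp : 1 < p) {a b c w : α → ℝ} (ha : AEMeasurable a μ) (hb : AEMeasurable b μ)
    (hc : AEMeasurable c μ) (hw : AEMeasurable w μ) (ha0 : ∀ x, 0 ≤ a x) (hb0 : ∀ x, 0 ≤ b x)
    (hc0 : ∀ x, 0 ≤ c x) (hw0 : ∀ᵐ x ∂μ, 0 < w x) :
    ∫⁻ x, ENNReal.ofReal (a x ^ (p - 1) * (b x * c x)) ∂μ ≤
      (∫⁻ x, ENNReal.ofReal (a x ^ p * w x) ∂μ) ^ ((p - 1) / p) *
        (∫⁻ x, ENNReal.ofReal (b x ^ p / w x ^ (p - 1) * c x ^ p) ∂μ) ^ (1 / p) := by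
  have hp0 : 0 < p := by linarith
  have hpq : (p / (p - 1)).HolderConjugate p := (Real.HolderConjugate.conjExponent hp).symm
  set F := fun x => ENNReal.ofReal (a x ^ p * w x)
  set G := fun x => ENNReal.ofReal (b x ^ p / w x ^ (p - 1) * c x ^ p)
  have hpt : (fun x => ENNReal.ofReal (a x ^ (p - 1) * (b x * c x))) =ᵐ[μ]
      (fun x => F x ^ ((p - 1) / p)) * fun x => G x ^ (1 / p) := by
    filter_upwards [hw0] with x hx
    have hax := ha0 x
    have hbx := hb0 x
    have hcx := hc0 x
    rw [Pi.mul_apply, ENNReal.ofReal_rpow_of_nonneg (by positivity) (by positivity),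
      ENNReal.ofReal_rpow_of_nonneg (by positivity) (by positivity),
      ← ENNReal.ofReal_mul (by positivity), ← mul_div_right_comm, ← Real.mul_rpow hbx hcx,
      ← rpow_sub_one_mul_eq_rpow_mul_rpow hp0 hax (mul_nonneg hbx hcx) hx]
  have hF : AEMeasurable F μ := by unfold F; fun_prop
  have hG : AEMeasurable G μ := by unfold G; fun_prop
  have hq : (p - 1) / p * (p / (p - 1)) = 1 := by field_simp [show p - 1 ≠ 0 by linarith]
  calc _ = ∫⁻ x, ((fun x => F x ^ ((p - 1) / p)) * fun x => G x ^ (1 / p)) x ∂μ :=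
        lintegral_congr_ae hpt
    _ ≤ _ := ENNReal.lintegral_mul_le_Lp_mul_Lq μ hpq (hF.pow_const _) (hG.pow_const _)
    _ = _ := by
      simp_rw [← ENNReal.rpow_mul]
      rw [hq, one_div_mul_cancel hp0.ne', one_div_div]
      simp only [ENNReal.rpow_one, F, G]

theorem ENNReal.le_rpow_mul_of_le_mul_rpow_mul_rpow {A B c : ENNReal} {p : ℝ} (hp : 0 < p)
    (hA : A ≠ ⊤) (h : A ≤ c * (A ^ ((p - 1) / p) * B ^ (1 / p))) : A ≤ c ^ p * B := by
  rcases eq_or_ne A 0 with rfl | hA0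
  · exact zero_le
  have hsplit : A ^ (1 / p) * A ^ ((p - 1) / p) = A := by
    rw [← ENNReal.rpow_add _ _ hA0 hA, show 1 / p + (p - 1) / p = 1 by field_simp; ring,
      ENNReal.rpow_one]
  have hroot : A ^ (1 / p) ≤ c * B ^ (1 / p) := by
    have hne0 : A ^ ((p - 1) / p) ≠ 0 := (ENNReal.rpow_pos (pos_iff_ne_zero.2 hA0) hA).ne'
    refine (ENNReal.mul_le_mul_iff_left hne0 (ENNReal.rpow_ne_top_of_ne_zero hA0 hA)).1 ?_
    calc A ^ (1 / p) * A ^ ((p - 1) / p) = A := hsplit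
      _ ≤ c * (A ^ ((p - 1) / p) * B ^ (1 / p)) := h
      _ = c * B ^ (1 / p) * A ^ ((p - 1) / p) := by ring
  calc A = (A ^ (1 / p)) ^ p := by
        rw [← ENNReal.rpow_mul, one_div_mul_cancel hp.ne', ENNReal.rpow_one]
    _ ≤ (c * B ^ (1 / p)) ^ p := ENNReal.rpow_le_rpow hroot hp.le
    _ = c ^ p * B := by
      rw [ENNReal.mul_rpow_of_nonneg _ _ hp.le, ← ENNReal.rpow_mul, one_div_mul_cancel hp.ne',
        ENNReal.rpow_one]

theorem HasCompactSupport.abs_rpow {X : Type*} [TopologicalSpace X] {u : X → ℝ}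
    (hu : HasCompactSupport u) {p : ℝ} (hp : p ≠ 0) : HasCompactSupport fun x => |u x| ^ p :=
  hu.comp_left (g := fun t => |t| ^ p) (by simp [hp])

theorem tsupport_abs_rpow_subset {X : Type*} [TopologicalSpace X] {u : X → ℝ} {p : ℝ}
    (hp : p ≠ 0) : tsupport (fun x => |u x| ^ p) ⊆ tsupport u :=
  tsupport_comp_subset (g := fun t => |t| ^ p) (by simp [hp]) u

section WeightedCalculus

variable {k : ℕ} {N : Fin k → ℕ} {α : Fin k → Fin k → ℝ}

theorem continuous_lamF (hα : ∀ i j, 0 ≤ α i j) (i : Fin k) : Continuous (lamF N α i) :=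
  continuous_finsetProd _ fun j _ =>
    ((PiLp.proj (𝕜 := ℝ) 2 _ j).continuous.norm).rpow_const fun _ => Or.inr (hα i j)

theorem lamF_add_smul_basisVecF {i : Fin k} (hαi : α i i = 0) (j : Fin (N i)) (x : Eb N)
    (t : ℝ) : lamF N α i (x + t • basisVecF N i j) = lamF N α i x := by
  refine Finset.prod_congr rfl fun l _ => ?_
  rcases eq_or_ne l i with rfl | hne
  · rw [hαi, Real.rpow_zero, Real.rpow_zero]
  · simp [basisVecF, Pi.single_eq_of_ne hne]

theorem inner_basisVecF (y : Eb N) (i : Fin k) (j : Fin (N i)) :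
    inner ℝ y (basisVecF N i j) = y i j := by
  rw [PiLp.inner_apply, Finset.sum_eq_single i]
  · simp [basisVecF, EuclideanSpace.inner_single_right]
  · intro l _ hl
    simp [basisVecF, Pi.single_eq_of_ne hl]
  · simp

theorem fderiv_apply_basisVecF (u : Eb N → ℝ) (x : Eb N) (i : Fin k) (j : Fin (N i)) :
    fderiv ℝ u x (basisVecF N i j) = gradient u x i j := by
  rw [← inner_gradient_left, inner_basisVecF]

theorem inner_lgradF (u : Eb N → ℝ) (x z : Eb N) :
    inner ℝ (lgradF N α u x) z =
      ∑ i, lamF N α i x * ∑ j, fderiv ℝ u x (basisVecF N i j) * z i j := by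
  simp only [lgradF, WithLp.equiv_symm_apply, PiLp.inner_apply, PiLp.smul_apply, smul_eq_mul,
    RCLike.inner_apply, Real.ringHom_apply, fderiv_apply_basisVecF, Finset.mul_sum]
  exact Finset.sum_congr rfl fun i _ => Finset.sum_congr rfl fun j _ => by ring

theorem lgradF_comp {φ : ℝ → ℝ} {φ' : ℝ} {u : Eb N → ℝ} {x : Eb N}
    (hφ : HasDerivAt φ φ' (u x)) (hu : DifferentiableAt ℝ u x) :
    lgradF N α (fun y => φ (u y)) x = φ' • lgradF N α u x := by
  have hgrad : gradient (fun y => φ (u y)) x = φ' • gradient u x := by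
    change (InnerProductSpace.toDual ℝ _).symm (fderiv ℝ (φ ∘ u) x) = _
    rw [(hφ.comp_hasFDerivAt x hu.hasFDerivAt).fderiv, _root_.map_smul, gradient]
  ext i
  simp [lgradF, hgrad, smul_comm (lamF N α i x) φ']

theorem lgradF_of_notMem_tsupport {u : Eb N → ℝ} {x : Eb N} (hx : x ∉ tsupport u) :
    lgradF N α u x = 0 := by
  ext i
  simp [lgradF, gradient, fderiv_of_notMem_tsupport ℝ hx]

theorem continuous_lgradF (hα : ∀ i j, 0 ≤ α i j) {u : Eb N → ℝ} (hu : ContDiff ℝ 1 u) :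
    Continuous (lgradF N α u) := by
  have hgrad : Continuous (gradient u) :=
    (InnerProductSpace.toDual ℝ _).symm.continuous.comp (hu.continuous_fderiv one_ne_zero)
  exact (PiLp.continuous_toLp 2 _).comp <| continuous_pi fun i =>
    (continuous_lamF hα i).smul ((PiLp.proj (𝕜 := ℝ) 2 _ i).continuous.comp hgrad)

theorem divlamF_smul {v : Eb N → ℝ} {h : Eb N → Eb N} {x : Eb N}
    (hv : DifferentiableAt ℝ v x) (hh : DifferentiableAt ℝ h x) :
    divlamF N α (fun y => v y • h y) x =
      v x * divlamF N α h x + inner ℝ (lgradF N α v x) (h x) := by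
  simp only [divlamF, inner_lgradF]
  rw [fderiv_fun_smul hv hh, Finset.mul_sum, ← Finset.sum_add_distrib]
  refine Finset.sum_congr rfl fun i _ => ?_
  simp only [add_apply, smul_apply, ContinuousLinearMap.smulRight_apply, PiLp.add_apply,
    PiLp.smul_apply, smul_eq_mul, Finset.mul_sum, ← Finset.sum_add_distrib]
  exact Finset.sum_congr rfl fun j _ => by ring

theorem continuousOn_divlamF (hα : ∀ i j, 0 ≤ α i j) {h : Eb N → Eb N} {Ω : Set (Eb N)}
    (hh : ContDiffOn ℝ 1 h Ω) (hΩ : IsOpen Ω) : ContinuousOn (divlamF N α h) Ω := by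
  have hdh := hh.continuousOn_fderiv_of_isOpen hΩ le_rfl
  have := continuous_lamF (N := N) hα
  unfold divlamF
  fun_prop

theorem measurable_divlamF (h : Eb N → Eb N) : Measurable (divlamF N α h) := by
  have hdh := measurable_fderiv ℝ h
  unfold divlamF lamF
  fun_prop

theorem integral_divlamF_eq_zero (hα : ∀ i j, 0 ≤ α i j) (hαi : ∀ i, α i i = 0)
    {H : Eb N → Eb N} (hH : ContDiff ℝ 1 H) (hHc : HasCompactSupport H) :
    ∫ x, divlamF N α H x = 0 := by
  let coord i (j : Fin (N i)) : Eb N →L[ℝ] ℝ := (EuclideanSpace.proj j).comp (PiLp.proj 2 _ i)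
  have hcoord : ∀ i (j : Fin (N i)) x,
      fderiv ℝ H x (basisVecF N i j) i j = fderiv ℝ (fun y => H y i j) x (basisVecF N i j) := by
    intro i j x
    have hd : HasFDerivAt (fun y => H y i j) ((coord i j).comp (fderiv ℝ H x)) x :=
      (coord i j).hasFDerivAt.comp x (hH.differentiable one_ne_zero x).hasFDerivAt
    rw [hd.fderiv]
    rfl
  have hcoordH : ∀ i (j : Fin (N i)), ContDiff ℝ 1 (fun y => H y i j) := fun i j =>
    (coord i j).contDiff.comp hH
  have hcoordHc : ∀ i (j : Fin (N i)), HasCompactSupport (fun y => H y i j) := fun i j =>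
    hHc.comp_left (g := fun z : Eb N => z i j) rfl
  have hint : ∀ i (j : Fin (N i)),
      Integrable fun x => lamF N α i x * fderiv ℝ (fun y => H y i j) x (basisVecF N i j) :=
    fun i j => integrable_mul_fderiv_apply (continuous_lamF hα i) (hcoordH i j) (hcoordHc i j) _
  simp only [divlamF, Finset.mul_sum, hcoord]
  rw [integral_finsetSum _ fun i _ => integrable_finsetSum _ fun j _ => hint i j]
  refine Finset.sum_eq_zero fun i _ => ?_
  rw [integral_finsetSum _ fun j _ => hint i j]
  exact Finset.sum_eq_zero fun j _ => integral_mul_fderiv_eq_zero_of_add_smul_eq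
    (continuous_lamF hα i) (lamF_add_smul_basisVecF (hαi i) j) (hcoordH i j) (hcoordHc i j)

theorem integrable_mul_divlamF (hα : ∀ i j, 0 ≤ α i j) {h : Eb N → Eb N} {Ω : Set (Eb N)}
    (hΩ : IsOpen Ω) (hh : ContDiffOn ℝ 1 h Ω) {v : Eb N → ℝ} (hv : Continuous v)
    (hvc : HasCompactSupport v) (hvΩ : tsupport v ⊆ Ω) :
    Integrable fun x => v x * divlamF N α h x :=
  (hv.continuousOn.mul (continuousOn_divlamF hα hh hΩ)).continuous_of_tsupport_subset hΩ
    (tsupport_mul_subset_left.trans hvΩ) |>.integrable_of_hasCompactSupport hvc.mul_right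

theorem integrable_inner_lgradF (hα : ∀ i j, 0 ≤ α i j) {h : Eb N → Eb N} {Ω : Set (Eb N)}
    (hΩ : IsOpen Ω) (hh : ContinuousOn h Ω) {v : Eb N → ℝ} (hv : ContDiff ℝ 1 v)
    (hvc : HasCompactSupport v) (hvΩ : tsupport v ⊆ Ω) :
    Integrable fun x => inner ℝ (lgradF N α v x) (h x) := by
  have hsupp : Function.support (fun x => inner ℝ (lgradF N α v x) (h x)) ⊆ tsupport v :=
    fun x hx => by_contra fun hxv => hx (by simp [lgradF_of_notMem_tsupport hxv])
  exact ((continuous_lgradF hα hv).continuousOn.inner hh).continuous_of_tsupport_subset hΩ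
    ((closure_minimal hsupp (isClosed_tsupport v)).trans hvΩ)
    |>.integrable_of_hasCompactSupport (hvc.mono' hsupp)

theorem setIntegral_mul_divlamF_eq_neg (hα : ∀ i j, 0 ≤ α i j) (hαi : ∀ i, α i i = 0)
    {h : Eb N → Eb N} {Ω : Set (Eb N)} (hΩ : IsOpen Ω) (hh : ContDiffOn ℝ 1 h Ω)
    {v : Eb N → ℝ} (hv : ContDiff ℝ 1 v) (hvc : HasCompactSupport v) (hvΩ : tsupport v ⊆ Ω) :
    ∫ x in Ω, v x * divlamF N α h x = -∫ x in Ω, inner ℝ (lgradF N α v x) (h x) := by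
  have hvhΩ : tsupport (fun y => v y • h y) ⊆ Ω := (tsupport_smul_subset_left _ _).trans hvΩ
  have hvh : ContDiff ℝ 1 (fun y => v y • h y) :=
    (hv.contDiffOn.smul hh).contDiff_of_tsupport_subset hΩ hvhΩ
  have hin : ∀ x ∈ Ω, divlamF N α (fun y => v y • h y) x =
      v x * divlamF N α h x + inner ℝ (lgradF N α v x) (h x) := fun x hx =>
    divlamF_smul (hv.differentiable one_ne_zero x)
      ((hh.contDiffAt (hΩ.mem_nhds hx)).differentiableAt one_ne_zero)
  have hout : ∀ x ∉ Ω, divlamF N α (fun y => v y • h y) x = 0 := fun x hx => by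
    simp [divlamF, fderiv_of_notMem_tsupport ℝ fun hx' => hx (hvhΩ hx')]
  have hsum : (∫ x in Ω, v x * divlamF N α h x) + ∫ x in Ω, inner ℝ (lgradF N α v x) (h x) = 0 := by
    rw [← integral_add (integrable_mul_divlamF hα hΩ hh hv.continuous hvc hvΩ).integrableOn
        (integrable_inner_lgradF hα hΩ hh.continuousOn hv hvc hvΩ).integrableOn,
      ← setIntegral_congr_fun hΩ.measurableSet hin,
      setIntegral_eq_integral_of_forall_compl_eq_zero hout,
      integral_divlamF_eq_zero hα hαi hvh (hvc.smul_right)]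
  linarith

theorem abs_inner_lgradF_abs_rpow_le {p : ℝ} (hp : 1 < p) {u : Eb N → ℝ} {x : Eb N}
    (hu : DifferentiableAt ℝ u x) (z : Eb N) :
    |inner ℝ (lgradF N α (fun y => |u y| ^ p) x) z| ≤
      p * (|u x| ^ (p - 1) * (‖z‖ * ‖lgradF N α u x‖)) := by
  have hp0 : 0 < p := by linarith
  have hψ : |p * |u x| ^ (p - 2) * u x| = p * |u x| ^ (p - 1) := by
    rw [abs_mul, abs_mul, abs_of_pos hp0, abs_of_nonneg (by positivity : 0 ≤ |u x| ^ (p - 2)),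
      mul_assoc, ← Real.rpow_add_one' (abs_nonneg _) (by linarith)]
    ring_nf
  rw [lgradF_comp (hasDerivAt_abs_rpow (u x) hp) hu, real_inner_smul_left, abs_mul, hψ,
    mul_comm ‖z‖, ← mul_assoc]
  gcongr
  exact abs_real_inner_le_norm _ _

theorem integrable_abs_rpow_mul_divlamF (hα : ∀ i j, 0 ≤ α i j) {h : Eb N → Eb N}
    {Ω : Set (Eb N)} (hΩ : IsOpen Ω) (hh : ContDiffOn ℝ 1 h Ω) {p : ℝ} (hp : 0 < p)
    {u : Eb N → ℝ} (hu : Continuous u) (hcs : HasCompactSupport u) (hsupp : tsupport u ⊆ Ω) :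
    Integrable fun x => |u x| ^ p * divlamF N α h x :=
  integrable_mul_divlamF hα hΩ hh (hu.abs.rpow_const fun _ => Or.inr hp.le)
    (hcs.abs_rpow hp.ne') ((tsupport_abs_rpow_subset hp.ne').trans hsupp)

theorem lintegral_abs_rpow_mul_divlamF_le (hα : ∀ i j, 0 ≤ α i j) (hαi : ∀ i, α i i = 0)
    {h : Eb N → Eb N} {Ω : Set (Eb N)} (hΩ : IsOpen Ω) (hh : ContDiffOn ℝ 1 h Ω)
    (hdiv : ∀ x ∈ Ω, 0 ≤ divlamF N α h x) {p : ℝ} (hp : 1 < p) {u : Eb N → ℝ}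
    (hu : ContDiff ℝ 1 u) (hcs : HasCompactSupport u) (hsupp : tsupport u ⊆ Ω) :
    ∫⁻ x in Ω, ENNReal.ofReal (|u x| ^ p * divlamF N α h x) ≤
      ENNReal.ofReal p *
        ∫⁻ x in Ω, ENNReal.ofReal (|u x| ^ (p - 1) * (‖h x‖ * ‖lgradF N α u x‖)) := by
  have hp0 : 0 < p := by linarith
  set G := fun x => inner ℝ (lgradF N α (fun y => |u y| ^ p) x) (h x)
  have hv : ContDiff ℝ 1 fun x => |u x| ^ p := by
    simpa only [Real.norm_eq_abs] using hu.norm_rpow hp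
  have hibp : ∫ x in Ω, |u x| ^ p * divlamF N α h x = -∫ x in Ω, G x :=
    setIntegral_mul_divlamF_eq_neg hα hαi hΩ hh hv (hcs.abs_rpow hp0.ne')
      ((tsupport_abs_rpow_subset hp0.ne').trans hsupp)
  calc _ = ENNReal.ofReal (∫ x in Ω, |u x| ^ p * divlamF N α h x) :=
        (ofReal_integral_eq_lintegral_ofReal
          (integrable_abs_rpow_mul_divlamF hα hΩ hh hp0 hu.continuous hcs hsupp).integrableOn
          (ae_restrict_of_forall_mem hΩ.measurableSet fun x hx =>
            mul_nonneg (by positivity) (hdiv x hx))).symm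
    _ ≤ ‖∫ x in Ω, G x‖ₑ := by
      rw [hibp, Real.enorm_eq_ofReal_abs]
      exact ENNReal.ofReal_le_ofReal (neg_le_abs _)
    _ ≤ ∫⁻ x in Ω, ‖G x‖ₑ := enorm_integral_le_lintegral_enorm _
    _ ≤ ∫⁻ x in Ω,
        ENNReal.ofReal p * ENNReal.ofReal (|u x| ^ (p - 1) * (‖h x‖ * ‖lgradF N α u x‖)) :=
      lintegral_mono fun x => by
        rw [Real.enorm_eq_ofReal_abs, ← ENNReal.ofReal_mul hp0.le]
        exact ENNReal.ofReal_le_ofReal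
          (abs_inner_lgradF_abs_rpow_le hp (hu.differentiable one_ne_zero x) (h x))
    _ = _ := lintegral_const_mul' _ _ ENNReal.ofReal_ne_top

end WeightedCalculus

theorem hardy_lemma_deltaLambda_general {k : ℕ}
    (N : Fin k → ℕ)
    (α : Fin k → Fin k → ℝ)
    (hα : ∀ i j, 0 ≤ α i j) (hα0 : ∀ i j : Fin k, i ≤ j → α i j = 0)
    (Ω : Set (Eb N)) (hΩ : IsOpen Ω)
    (p : ℝ) (hp : 1 < p)
    (h : Eb N → Eb N) (hh : ContDiffOn ℝ 1 h Ω)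
    (hdiv : ∀ x ∈ Ω, 0 < divlamF N α h x)
    (u : Eb N → ℝ) (hu : ContDiff ℝ 1 u)
    (hcs : HasCompactSupport u) (hsupp : tsupport u ⊆ Ω) :
    ∫⁻ x in Ω, ENNReal.ofReal (|u x| ^ p * divlamF N α h x) ≤
      ENNReal.ofReal (p ^ p) *
        ∫⁻ x in Ω,
          ENNReal.ofReal
            (‖h x‖ ^ p / (divlamF N α h x) ^ (p - 1) * ‖lgradF N α u x‖ ^ p) := by
  have hp0 : 0 < p := by linarith
  have hA : ∫⁻ x in Ω, ENNReal.ofReal (|u x| ^ p * divlamF N α h x) ≠ ⊤ :=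
    (integrable_abs_rpow_mul_divlamF hα hΩ hh hp0 hu.continuous hcs hsupp).integrableOn
      |>.lintegral_lt_top.ne
  have hHolder := lintegral_rpow_sub_one_mul_mul_le (μ := volume.restrict Ω) hp
    (a := fun x => |u x|) (b := fun x => ‖h x‖) (c := fun x => ‖lgradF N α u x‖)
    hu.continuous.abs.aemeasurable (hh.continuousOn.norm.aemeasurable hΩ.measurableSet)
    (continuous_lgradF hα hu).norm.aemeasurable (measurable_divlamF h).aemeasurable
    (fun _ => abs_nonneg _) (fun _ => norm_nonneg _) (fun _ => norm_nonneg _)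
    (ae_restrict_of_forall_mem hΩ.measurableSet hdiv)
  rw [← ENNReal.ofReal_rpow_of_nonneg hp0.le hp0.le]
  refine ENNReal.le_rpow_mul_of_le_mul_rpow_mul_rpow hp0 hA ?_
  exact (lintegral_abs_rpow_mul_divlamF_le hα (fun i => hα0 i i le_rfl) hΩ hh
    (fun x hx => (hdiv x hx).le) hp hu hcs hsupp).trans (by gcongr)

/-- Mitidieri-type lemma for `Δ_λ`-Laplacians: if `div_λ h > 0` on the open set
`Ω`, then `∫_Ω |u|^p div_λ h ≤ p^p ∫_Ω (|h|^p/(div_λ h)^{p-1}) |∇_λ u|^p`. -/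
theorem hardy_lemma_deltaLambda {k : ℕ} (hk : 0 < k)
    (N : Fin k → ℕ) (hN : ∀ i, 1 ≤ N i)
    (α : Fin k → Fin k → ℝ)
    (hα : ∀ i j, 0 ≤ α i j) (hα0 : ∀ i j : Fin k, i ≤ j → α i j = 0)
    (Ω : Set (Eb N)) (hΩ : IsOpen Ω)
    (p : ℝ) (hp : 1 < p)
    (h : Eb N → Eb N) (hh : ContDiffOn ℝ 1 h Ω)
    (hdiv : ∀ x ∈ Ω, 0 < divlamF N α h x)
    (u : Eb N → ℝ) (hu : ContDiff ℝ 1 u)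
    (hcs : HasCompactSupport u) (hsupp : tsupport u ⊆ Ω)
    (hfin : ∫⁻ x in Ω,
        ENNReal.ofReal (‖h x‖ ^ p / (divlamF N α h x) ^ (p - 1) * ‖lgradF N α u x‖ ^ p) < ⊤) :
    ∫⁻ x in Ω, ENNReal.ofReal (|u x| ^ p * divlamF N α h x) ≤
      ENNReal.ofReal (p ^ p) *
        ∫⁻ x in Ω,
          ENNReal.ofReal
            (‖h x‖ ^ p / (divlamF N α h x) ^ (p - 1) * ‖lgradF N α u x‖ ^ p) :=
  hardy_lemma_deltaLambda_general N α hα hα0 Ω hΩ p hp h hh hdiv u hu hcs hsupp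

end
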